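/- For any probability vector (p_i)_{i∈Ω} on a finite set Ω, ∑_{i∈Ω} p_i^2(1−p_i) ≤ (∑_{i∈Ω} p_i^2)·(∑_{i∈Ω} p_i(1−p_i)). -/

import Mathlib

/-!
Expanding both sides, the inequality becomes `(∑ pᵢ²)² ≤ ∑ pᵢ³ = (∑ pᵢ) (∑ pᵢ³)`, which is
Cauchy–Schwarz for the vectors `(√pᵢ)` and `(pᵢ^{3/2})`.
-/

open Finset

theorem sq_sum_sq_le_sum_mul_sum_pow_three {ι : Type*} (s : Finset ι) (p : ι → ℝ)
    (hp : ∀ i ∈ s, 0 ≤ p i) :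
    (∑ i ∈ s, p i ^ 2) ^ 2 ≤ (∑ i ∈ s, p i) * ∑ i ∈ s, p i ^ 3 :=
  sum_sq_le_sum_mul_sum_of_sq_le_mul s hp (fun i hi => pow_nonneg (hp i hi) 3)
    (fun _ _ => le_of_eq (by ring))

theorem match_and_mismatch_le_prod {Ω : Type*} [Fintype Ω] (p : Ω → ℝ)
    (hp : ∀ i, 0 ≤ p i) (hsum : ∑ i, p i = 1) :
    ∑ i, (p i) ^ 2 * (1 - p i) ≤ (∑ i, (p i) ^ 2) * (∑ i, p i * (1 - p i)) := by
  have hcs := sq_sum_sq_le_sum_mul_sum_pow_three univ p fun i _ => hp i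
  rw [hsum, one_mul] at hcs
  calc ∑ i, p i ^ 2 * (1 - p i) = ∑ i, p i ^ 2 - ∑ i, p i ^ 3 := by
        rw [← sum_sub_distrib]; congr 1; ext i; ring
    _ ≤ ∑ i, p i ^ 2 - (∑ i, p i ^ 2) ^ 2 := by linarith
    _ = (∑ i, p i ^ 2) * (∑ i, p i - ∑ i, p i ^ 2) := by rw [hsum]; ring
    _ = (∑ i, p i ^ 2) * ∑ i, p i * (1 - p i) := by
        rw [← sum_sub_distrib]; congr 1; congr 1; ext i; ring
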